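/- Let E be an elliptic curve over ℚ with Weierstrass equation y² = x³ − x. The rational map f(x, y) = −(1 − x)²/(4x) defines a finite morphism E → P¹ of degree 4 which is unramified outside {0, 1, ∞}. -/

import Mathlib

/-!
Write `f(x) = -(1 - x)² / (4x)`. For `x ≠ 0`, the equation `f(x) = t` is the quadratic
`x² + (4t - 2)x + 1 = 0` of discriminant `16 t (t - 1)`, so for `t ∉ {0, 1}` it has two distinct
roots. The ramification points of `E → ℙ¹, (x, y) ↦ x` are the points with `x³ - x = 0`, and these
lie over `f(0) = ∞`, `f(1) = 0` and `f(-1) = 1`; hence over each of the two roots there are exactly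
two points of `E`, four in all.
-/

section

variable {K : Type*} [Field K]

def belyiMap (x : K) : K := -(1 - x) ^ 2 / (4 * x)

private lemma four_ne_zero_of_two [NeZero (2 : K)] : (4 : K) ≠ 0 := by
  rw [show (4 : K) = 2 * 2 by norm_num]
  exact mul_ne_zero two_ne_zero two_ne_zero

lemma belyiMap_eq_iff [NeZero (2 : K)] {x t : K} (hx : x ≠ 0) :
    belyiMap x = t ↔ x ^ 2 + (4 * t - 2) * x + 1 = 0 := by
  have h4 : (4 : K) * x ≠ 0 := mul_ne_zero four_ne_zero_of_two hx
  rw [belyiMap, div_eq_iff h4]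
  constructor <;> intro h <;> linear_combination -h

lemma eq_zero_or_belyiMap_eq_zero_or_one [NeZero (2 : K)] {x : K} (hx : x ^ 3 - x = 0) :
    x = 0 ∨ belyiMap x = 0 ∨ belyiMap x = 1 := by
  have : x * ((x - 1) * (x + 1)) = 0 := by linear_combination hx
  rcases mul_eq_zero.1 this with h | h
  · exact .inl h
  rcases mul_eq_zero.1 h with h | h
  · obtain rfl : x = 1 := sub_eq_zero.1 h
    simp [belyiMap]
  · obtain rfl : x = -1 := eq_neg_of_add_eq_zero_left h
    right; right
    rw [belyiMap, div_eq_one_iff_eq (by simpa using four_ne_zero_of_two)]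
    ring

lemma setOf_belyiMap_eq [NeZero (2 : K)] {t s : K} (hs : s ^ 2 = t ^ 2 - t) :
    {x : K | x ≠ 0 ∧ belyiMap x = t} = {1 - 2 * t + 2 * s, 1 - 2 * t - 2 * s} := by
  ext x
  have hfactor : x ^ 2 + (4 * t - 2) * x + 1 =
      (x - (1 - 2 * t + 2 * s)) * (x - (1 - 2 * t - 2 * s)) := by
    linear_combination 4 * hs
  simp only [Set.mem_ofPred_eq, Set.mem_insert_iff, Set.mem_singleton_iff]
  constructor
  · rintro ⟨hx, hxt⟩
    rw [belyiMap_eq_iff hx, hfactor, mul_eq_zero, sub_eq_zero, sub_eq_zero] at hxt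
    exact hxt
  · intro hx
    have hroot : x ^ 2 + (4 * t - 2) * x + 1 = 0 := by
      rw [hfactor, mul_eq_zero, sub_eq_zero, sub_eq_zero]
      exact hx
    have hx0 : x ≠ 0 := by
      rintro rfl
      simp at hroot
    exact ⟨hx0, (belyiMap_eq_iff hx0).2 hroot⟩

lemma ncard_setOf_belyiMap_eq [NeZero (2 : K)] [IsAlgClosed K] {t : K} (ht0 : t ≠ 0)
    (ht1 : t ≠ 1) : {x : K | x ≠ 0 ∧ belyiMap x = t}.ncard = 2 := by
  obtain ⟨s, hs⟩ := IsAlgClosed.exists_pow_nat_eq (t ^ 2 - t) two_pos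
  have hs0 : s ≠ 0 := by
    rintro rfl
    have : t * (t - 1) = 0 := by linear_combination -hs
    exact (mul_ne_zero ht0 (sub_ne_zero.2 ht1)) this
  rw [setOf_belyiMap_eq hs]
  refine Set.ncard_pair fun h => hs0 ?_
  have : (2 * 2 : K) * s = 0 := by linear_combination h
  simpa [two_ne_zero' K] using this

lemma ncard_setOf_sq_eq_sq [NeZero (2 : K)] (X : Set K) {r : K → K} (hr : ∀ x ∈ X, r x ≠ 0) :
    {P : K × K | P.1 ∈ X ∧ P.2 ^ 2 = r P.1 ^ 2}.ncard = 2 * X.ncard := by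
  have hsigns : ({1, -1} : Set K).ncard = 2 := by
    refine Set.ncard_pair fun h => two_ne_zero' K ?_
    linear_combination h
  have himage : {P : K × K | P.1 ∈ X ∧ P.2 ^ 2 = r P.1 ^ 2} =
      (fun p : K × K => (p.1, p.2 * r p.1)) '' X ×ˢ {1, -1} := by
    ext ⟨x, y⟩
    simp only [Set.mem_ofPred_eq, Set.mem_image, Set.mem_prod, Set.mem_insert_iff,
      Set.mem_singleton_iff, Prod.exists, Prod.mk.injEq, sq_eq_sq_iff_eq_or_eq_neg]
    constructor
    · rintro ⟨hx, hy | hy⟩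
      · exact ⟨x, 1, ⟨hx, .inl rfl⟩, rfl, by rw [hy, one_mul]⟩
      · exact ⟨x, -1, ⟨hx, .inr rfl⟩, rfl, by rw [hy, neg_one_mul]⟩
    · rintro ⟨x, ε, ⟨hx, rfl | rfl⟩, rfl, rfl⟩
      · exact ⟨hx, .inl (one_mul _)⟩
      · exact ⟨hx, .inr (neg_one_mul _)⟩
  have hinj : Set.InjOn (fun p : K × K => (p.1, p.2 * r p.1)) (X ×ˢ {1, -1}) := by
    rintro ⟨x, ε⟩ ⟨hx, -⟩ ⟨x', ε'⟩ - h
    simp only [Prod.mk.injEq] at h ⊢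
    obtain ⟨rfl, h⟩ := h
    exact ⟨rfl, mul_right_cancel₀ (hr x hx) h⟩
  rw [himage, hinj.ncard_image, Set.ncard_prod, hsigns, mul_comm]

end

/-- The rational map `f(x, y) = -(1 - x)² / (4x)` on the elliptic curve `y² = x³ - x`
is a finite morphism `E → ℙ¹` of degree `4`, unramified outside `{0, 1, ∞}`:
over any algebraically closed field of characteristic zero (e.g. `ℚ̄`), for every
`t ∉ {0, 1, ∞}` the fiber `f⁻¹(t)` consists of exactly `4 = deg f` affine points of `E`
(the point at infinity `O` of `E` lies over `∞`, and points with `x = 0` over `∞`). -/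
theorem stmt10 (K : Type*) [Field K] [IsAlgClosed K] [CharZero K]
    (t : K) (ht0 : t ≠ 0) (ht1 : t ≠ 1) :
    Set.ncard {P : K × K | P.2 ^ 2 = P.1 ^ 3 - P.1 ∧ P.1 ≠ 0 ∧
      -(1 - P.1) ^ 2 / (4 * P.1) = t} = 4 := by
  choose r hr using fun x : K => IsAlgClosed.exists_pow_nat_eq (x ^ 3 - x) two_pos
  have hfiber : {P : K × K | P.2 ^ 2 = P.1 ^ 3 - P.1 ∧ P.1 ≠ 0 ∧
      -(1 - P.1) ^ 2 / (4 * P.1) = t} =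
      {P : K × K | P.1 ∈ {x : K | x ≠ 0 ∧ belyiMap x = t} ∧ P.2 ^ 2 = r P.1 ^ 2} := by
    ext P
    simp only [Set.mem_ofPred_eq, hr, belyiMap]
    tauto
  have hunramified : ∀ x ∈ {x : K | x ≠ 0 ∧ belyiMap x = t}, r x ≠ 0 := by
    rintro x ⟨hx0, rfl⟩ hrx
    have hx : x ^ 3 - x = 0 := by rw [← hr, hrx, zero_pow two_ne_zero]
    rcases eq_zero_or_belyiMap_eq_zero_or_one hx with h | h | h
    exacts [hx0 h, ht0 h, ht1 h]
  rw [hfiber, ncard_setOf_sq_eq_sq _ hunramified, ncard_setOf_belyiMap_eq ht0 ht1]
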